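/- arXiv:1509.00231 — 2 statements merged into one kernel-verified Lean document; each statement's English description precedes it below -/
import Mathlib

section
/- If f is a γ-balanced driver for some γ ∈ (0,1), then f satisfies the comparison condition: for any t ≥ 0, y ∈ ℝ, z, z' ∈ ℝ^N and any atom F ∈ F_t, on F one has f(ω,t,y,z) − f(ω,t,y,z') > min_{i∈J_t^F}{(z−z')ᵀ(e_i − E[X_{t+1} | F_t])} whenever this minimum is strictly negative, and f(ω,t,y,z) − f(ω,t,y,z') = 0 whenever this minimum equals 0. -/
open MeasureTheory Finset Filter

noncomputable section

namespace DiscreteEBSDE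

variable {Ω : Type*} {mΩ : MeasurableSpace Ω} {N : ℕ}

/-- The standard basis vector `e i` of `ℝ^N`. -/
def e (N : ℕ) (i : Fin N) : Fin N → ℝ := Pi.single i 1

/-- The Euclidean inner product on `ℝ^N`. -/
def dotR {N : ℕ} (z w : Fin N → ℝ) : ℝ := ∑ i, z i * w i

/-- The process `X` takes values in the standard basis of `ℝ^N`. -/
def BasisValued (X : ℕ → Ω → (Fin N → ℝ)) : Prop := ∀ t ω, ∃ i, X t ω = e N i

/-- The σ-algebra generated by `X 0, …, X t`. -/
def natSigma (X : ℕ → Ω → (Fin N → ℝ)) (t : ℕ) : MeasurableSpace Ω :=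
  ⨆ s ∈ Set.Iic t, MeasurableSpace.comap (X s) inferInstance

/-- `F` is the `P`-completion of the natural filtration of `X`:
a set is `F t`-measurable iff it agrees with a set of the natural σ-algebra up to a
`P`-null symmetric difference. -/
def IsCompletedNaturalFiltration (P : Measure Ω) (X : ℕ → Ω → (Fin N → ℝ))
    (F : Filtration ℕ mΩ) : Prop :=
  ∀ (t : ℕ) (A : Set Ω), MeasurableSet[F t] A ↔
    ∃ B : Set Ω, MeasurableSet[natSigma X t] B ∧ P (symmDiff A B) = 0

/-- The martingale difference `M (t+1) = X (t+1) - E[X (t+1) | F t]` (componentwise). -/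
def Mdiff (P : Measure Ω) (F : Filtration ℕ mΩ) (X : ℕ → Ω → (Fin N → ℝ)) (t : ℕ)
    (ω : Ω) : Fin N → ℝ :=
  fun i => X (t + 1) ω i - (P[(fun ω' => X (t + 1) ω' i)|F t]) ω

/-- The conditional second moment `‖Z‖²_{M_{t+1}} = E[(Zᵀ M_{t+1})² | F t]`. -/
def seminormSq (P : Measure Ω) (F : Filtration ℕ mΩ) (X : ℕ → Ω → (Fin N → ℝ))
    (t : ℕ) (Z : Ω → Fin N → ℝ) : Ω → ℝ :=
  P[(fun ω => (dotR (Z ω) (Mdiff P F X t ω)) ^ 2)|F t]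

/-- The stochastic seminorm `‖Z‖_{M_{t+1}}`. -/
def mSeminorm (P : Measure Ω) (F : Filtration ℕ mΩ) (X : ℕ → Ω → (Fin N → ℝ))
    (t : ℕ) (Z : Ω → Fin N → ℝ) (ω : Ω) : ℝ :=
  Real.sqrt (seminormSq P F X t Z ω)

/-- `Z ∼_{M_{t+1}} Z'`, i.e. `‖Z - Z'‖_{M_{t+1}} = 0` a.s. -/
def equivMt (P : Measure Ω) (F : Filtration ℕ mΩ) (X : ℕ → Ω → (Fin N → ℝ)) (t : ℕ)
    (Z Z' : Ω → Fin N → ℝ) : Prop :=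
  seminormSq P F X t (fun ω => Z ω - Z' ω) =ᵐ[P] 0

/-- `Z ∼_M Z'`. -/
def equivM (P : Measure Ω) (F : Filtration ℕ mΩ) (X : ℕ → Ω → (Fin N → ℝ))
    (Z Z' : ℕ → Ω → Fin N → ℝ) : Prop :=
  ∀ t, equivMt P F X t (Z t) (Z' t)

/-- A driver `f(ω,t,y,z)` is adapted if `(ω,y,z) ↦ f(ω,t,y,z)` is
`F t ⊗ B(ℝ) ⊗ B(ℝ^N)`-measurable for every `t`. -/
def DriverAdapted (F : Filtration ℕ mΩ) (f : Ω → ℕ → ℝ → (Fin N → ℝ) → ℝ) : Prop :=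
  ∀ t : ℕ, Measurable[(F t).prod inferInstance]
    fun p : Ω × (ℝ × (Fin N → ℝ)) => f p.1 t p.2.1 p.2.2

/-- A column-stochastic transition matrix. -/
def IsTransMat {n : ℕ} (A : Matrix (Fin n) (Fin n) ℝ) : Prop :=
  (∀ i j, 0 ≤ A i j) ∧ ∀ j, ∑ i, A i j = 1

/-- `X` is a Markov chain with transition matrices `A t`; since `X` is valued in the
standard basis this is equivalent to `E[X (t+1) | F t] = (A t) (X t)` a.s. -/
def IsMarkovChain (P : Measure Ω) (F : Filtration ℕ mΩ) (X : ℕ → Ω → (Fin N → ℝ))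
    (A : ℕ → Matrix (Fin N) (Fin N) ℝ) : Prop :=
  (∀ t, IsTransMat (A t)) ∧
    ∀ (t : ℕ) (i : Fin N),
      (P[(fun ω => X (t + 1) ω i)|F t]) =ᵐ[P] fun ω => (A t).mulVec (X t ω) i

/-- The atom of `F t` containing `ω₀` (the set of paths agreeing with `ω₀` up to time `t`). -/
def pathAtom (X : ℕ → Ω → (Fin N → ℝ)) (t : ℕ) (ω₀ : Ω) : Set Ω :=
  {ω' | ∀ s ≤ t, X s ω' = X s ω₀}

/-- `min_{i ∈ J_t^F} (z - z')ᵀ(e_i - E[X_{t+1} | F_t])` where `F` is the atom of `ω₀`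
 at time `t` and `J_t^F = {i : P(X_{t+1} = e_i | F) > 0}`. -/
def minJump (P : Measure Ω) (F : Filtration ℕ mΩ) (X : ℕ → Ω → (Fin N → ℝ))
    (t : ℕ) (ω₀ : Ω) (z z' : Fin N → ℝ) (ω : Ω) : ℝ :=
  sInf {r : ℝ | ∃ i : Fin N,
    0 < P ({ω' | X (t + 1) ω' = e N i} ∩ pathAtom X t ω₀) ∧
    r = dotR (z - z') (fun j => e N i j - (P[(fun ω'' => X (t + 1) ω'' j)|F t]) ω)}

/-- The comparison condition of the change-of-measure proposition: on every atom `F` of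
`F t`, `f(ω,t,y,z) - f(ω,t,y,z') > min_{i ∈ J_t^F}{(z-z')ᵀ(e_i - E[X_{t+1}|F_t])}`, unless
this minimum is `0`, in which case equality holds. -/
def ComparisonCondition (P : Measure Ω) (F : Filtration ℕ mΩ) (X : ℕ → Ω → (Fin N → ℝ))
    (f : Ω → ℕ → ℝ → (Fin N → ℝ) → ℝ) : Prop :=
  ∀ (t : ℕ) (y : ℝ) (z z' : Fin N → ℝ) (ω₀ : Ω), 0 < P (pathAtom X t ω₀) →
    ∀ᵐ ω ∂P, ω ∈ pathAtom X t ω₀ →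
      (minJump P F X t ω₀ z z' ω = 0 → f ω t y z - f ω t y z' = 0) ∧
      (minJump P F X t ω₀ z z' ω ≠ 0 →
        minJump P F X t ω₀ z z' ω < f ω t y z - f ω t y z')

/-- `f` is Lipschitz in `z` with constant `L`, w.r.t. the stochastic seminorm. -/
def DriverLipschitzNoY (P : Measure Ω) (F : Filtration ℕ mΩ) (X : ℕ → Ω → (Fin N → ℝ))
    (L : ℝ) (f : Ω → ℕ → (Fin N → ℝ) → ℝ) : Prop :=
  ∀ (t : ℕ) (Zt Z't : Ω → Fin N → ℝ),
    StronglyMeasurable[F t] Zt → StronglyMeasurable[F t] Z't →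
    ∀ᵐ ω ∂P, |f ω t (Zt ω) - f ω t (Z't ω)| ≤
      L * mSeminorm P F X t (fun ω' => Zt ω' - Z't ω') ω

/-- `(Y,Z)` is an adapted solution of the finite horizon BSDE with driver `f`,
horizon `T` and terminal condition `ξ`. -/
def SolvesFiniteBSDE (P : Measure Ω) (F : Filtration ℕ mΩ) (X : ℕ → Ω → (Fin N → ℝ))
    (f : Ω → ℕ → ℝ → (Fin N → ℝ) → ℝ) (T : ℕ) (ξ : Ω → ℝ)
    (Y : ℕ → Ω → ℝ) (Z : ℕ → Ω → Fin N → ℝ) : Prop :=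
  Adapted F Y ∧ Adapted F Z ∧
    ∀ t ≤ T, ∀ᵐ ω ∂P,
      Y t ω - ∑ u ∈ Finset.Ico t T, f ω u (Y u ω) (Z u ω) +
        ∑ u ∈ Finset.Ico t T, dotR (Z u ω) (Mdiff P F X u ω) = ξ ω

/-- `(Y,Z)` is an adapted solution of the infinite-horizon discounted BSDE
with discount rate `α` and driver `f` (independent of `y`). -/
def SolvesDiscountedBSDE (P : Measure Ω) (F : Filtration ℕ mΩ) (X : ℕ → Ω → (Fin N → ℝ))
    (α : ℝ) (f : Ω → ℕ → (Fin N → ℝ) → ℝ)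
    (Y : ℕ → Ω → ℝ) (Z : ℕ → Ω → Fin N → ℝ) : Prop :=
  Adapted F Y ∧ Adapted F Z ∧
    ∀ t T : ℕ, t < T → ∀ᵐ ω ∂P,
      Y T ω = Y t ω - ∑ u ∈ Finset.Ico t T, (f ω u (Z u ω) - α * Y u ω) +
        ∑ u ∈ Finset.Ico t T, dotR (Z u ω) (Mdiff P F X u ω)

/-- `(Y,Z,lam)` solves the Ergodic BSDE with Markovian driver `f`. -/
def SolvesEBSDE (P : Measure Ω) (F : Filtration ℕ mΩ) (X : ℕ → Ω → (Fin N → ℝ))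
    (f : (Fin N → ℝ) → (Fin N → ℝ) → ℝ) (Y : ℕ → Ω → ℝ) (Z : ℕ → Ω → Fin N → ℝ)
    (lam : ℝ) : Prop :=
  ∀ t T : ℕ, t < T → ∀ᵐ ω ∂P,
    Y T ω = Y t ω - ∑ u ∈ Finset.Ico t T, (f (X u ω) (Z u ω) - lam) +
      ∑ u ∈ Finset.Ico t T, dotR (Z u ω) (Mdiff P F X u ω)

/-- Ratio with the convention `0/0 := 1`. -/
def balRatio (a b : ℝ) : ℝ := if a = 0 ∧ b = 0 then 1 else a / b

/-- The driver `f(ω,t,y,z)` is `γ`-balanced. -/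
def IsGammaBalanced (P : Measure Ω) (F : Filtration ℕ mΩ) (X : ℕ → Ω → (Fin N → ℝ))
    (A : ℕ → Matrix (Fin N) (Fin N) ℝ) (γ : ℝ)
    (f : Ω → ℕ → ℝ → (Fin N → ℝ) → ℝ) : Prop :=
  ∃ ψ : Ω → ℕ → (Fin N → ℝ) → (Fin N → ℝ) → (Fin N → ℝ),
    (∀ t : ℕ, Measurable[(F t).prod inferInstance]
      fun p : Ω × ((Fin N → ℝ) × (Fin N → ℝ)) => ψ p.1 t p.2.1 p.2.2) ∧
    ∀ (t : ℕ) (y : ℝ) (z z' : Fin N → ℝ), ∀ᵐ ω ∂P,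
      f ω t y z - f ω t y z' =
          dotR (z - z') (fun i => ψ ω t z z' i - (A t).mulVec (X t ω) i) ∧
        (∀ i, balRatio (ψ ω t z z' i) ((A t).mulVec (X t ω) i) ∈ Set.Icc γ γ⁻¹) ∧
        ∑ i, ψ ω t z z' i = 1

/-- The driver `f(ω,t,z)` (independent of `y`) is `γ`-balanced. -/
def IsGammaBalancedNoY (P : Measure Ω) (F : Filtration ℕ mΩ) (X : ℕ → Ω → (Fin N → ℝ))
    (A : ℕ → Matrix (Fin N) (Fin N) ℝ) (γ : ℝ)
    (f : Ω → ℕ → (Fin N → ℝ) → ℝ) : Prop :=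
  ∃ ψ : Ω → ℕ → (Fin N → ℝ) → (Fin N → ℝ) → (Fin N → ℝ),
    (∀ t : ℕ, Measurable[(F t).prod inferInstance]
      fun p : Ω × ((Fin N → ℝ) × (Fin N → ℝ)) => ψ p.1 t p.2.1 p.2.2) ∧
    ∀ (t : ℕ) (z z' : Fin N → ℝ), ∀ᵐ ω ∂P,
      f ω t z - f ω t z' =
          dotR (z - z') (fun i => ψ ω t z z' i - (A t).mulVec (X t ω) i) ∧
        (∀ i, balRatio (ψ ω t z z' i) ((A t).mulVec (X t ω) i) ∈ Set.Icc γ γ⁻¹) ∧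
        ∑ i, ψ ω t z z' i = 1

/-- A probability vector on `Fin n`. -/
def IsProbVec {n : ℕ} (μ : Fin n → ℝ) : Prop := (∀ i, 0 ≤ μ i) ∧ ∑ i, μ i = 1

/-- Total variation distance between (signed) measures on a finite state space. -/
def tvDist {n : ℕ} (μ ν : Fin n → ℝ) : ℝ := (∑ x, |μ x - ν x|) / 2

/-- Uniform ergodicity of the chain induced by the column-stochastic matrix `A`. -/
def UniformlyErgodic {n : ℕ} (A : Matrix (Fin n) (Fin n) ℝ) : Prop :=
  ∃ π : Fin n → ℝ, IsProbVec π ∧ ∃ R ρ : ℝ, 0 < R ∧ 0 < ρ ∧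
    ∀ (t : ℕ) (μ : Fin n → ℝ), IsProbVec μ →
      tvDist ((A ^ t).mulVec μ) π ≤ R * Real.exp (-ρ * t)

/-! On an atom of `F t` the chain sits in a fixed state `e k`, so `E[X (t+1) | F t]` is the
column `c = A t e k` there and `P(X (t+1) = e i | atom) = c i`: the index set `J` is the support
of `c`. With `v i = (z - z')ᵀ(e i - c)`, the driver difference is the `ψ`-average of `v`,
whereas the `c`-average of `v` vanishes, and `γ`-balancedness gives `ψ` the same support as `c`.
Hence `min_J v ≤ 0`; if it is `0` then `v` vanishes on `J` and so does its `ψ`-average, and if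
it is negative then some `v j` with `j ∈ J` is nonnegative, which lifts the `ψ`-average strictly
above the minimum. -/

def supportMin {ι : Type*} (c v : ι → ℝ) : ℝ := sInf {r | ∃ i, 0 < c i ∧ r = v i}

section SupportMin

variable {ι : Type*} {c w v : ι → ℝ}

theorem supportMin_le [Finite ι] {i : ι} (hi : 0 < c i) : supportMin c v ≤ v i :=
  csInf_le ((Set.finite_range v).subset (by rintro _ ⟨j, -, rfl⟩; exact ⟨j, rfl⟩)).bddBelow
    ⟨i, hi, rfl⟩

variable [Fintype ι]

theorem exists_pos_nonneg_of_sum_mul_eq_zero (hc : ∀ i, 0 ≤ c i) (hc₀ : ∃ i, 0 < c i)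
    (hcv : ∑ i, c i * v i = 0) : ∃ i, 0 < c i ∧ 0 ≤ v i := by
  by_contra! h
  obtain ⟨i, hi⟩ := hc₀
  refine (Finset.sum_neg' (fun j _ => ?_)
    ⟨i, Finset.mem_univ i, mul_neg_of_pos_of_neg hi (h i hi)⟩).ne hcv
  rcases (hc j).eq_or_lt with hj | hj
  · simp [← hj]
  · exact (mul_neg_of_pos_of_neg hj (h j hj)).le

theorem supportMin_lt_sum_mul (hc : ∀ i, 0 ≤ c i) (hcv : ∑ i, c i * v i = 0)
    (hw₀ : ∀ i, c i = 0 → w i = 0) (hw : ∀ i, 0 < c i → 0 < w i) (hw₁ : ∑ i, w i = 1)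
    (hm : supportMin c v < 0) : supportMin c v < ∑ i, w i * v i := by
  have hc₀ : ∃ i, 0 < c i := by
    obtain ⟨i, -, hi⟩ := Finset.exists_ne_zero_of_sum_ne_zero (hw₁.trans_ne one_ne_zero)
    exact ⟨i, (hc i).lt_of_ne' (mt (hw₀ i) hi)⟩
  obtain ⟨j, hcj, hvj⟩ := exists_pos_nonneg_of_sum_mul_eq_zero hc hc₀ hcv
  calc supportMin c v = ∑ i, w i * supportMin c v := by rw [← Finset.sum_mul, hw₁, one_mul]
    _ < ∑ i, w i * v i := by
      refine Finset.sum_lt_sum (fun i _ => ?_) ⟨j, Finset.mem_univ j, ?_⟩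
      · rcases (hc i).eq_or_lt with hi | hi
        · simp [hw₀ i hi.symm]
        · exact mul_le_mul_of_nonneg_left (supportMin_le hi) (hw i hi).le
      · exact mul_lt_mul_of_pos_left (hm.trans_le hvj) (hw j hcj)

theorem sum_mul_eq_zero_of_supportMin_eq_zero (hc : ∀ i, 0 ≤ c i) (hcv : ∑ i, c i * v i = 0)
    (hw₀ : ∀ i, c i = 0 → w i = 0) (hm : supportMin c v = 0) : ∑ i, w i * v i = 0 := by
  have hcv_nonneg : ∀ i ∈ Finset.univ, 0 ≤ c i * v i := fun i _ => by
    rcases (hc i).eq_or_lt with hi | hi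
    · simp [← hi]
    · exact mul_nonneg hi.le (hm ▸ supportMin_le hi)
  refine Finset.sum_eq_zero fun i hi => ?_
  rcases mul_eq_zero.1 ((Finset.sum_eq_zero_iff_of_nonneg hcv_nonneg).1 hcv i hi) with h | h
  · simp [hw₀ i h]
  · simp [h]

end SupportMin

theorem dotR_single_sub (d c : Fin N → ℝ) (i : Fin N) :
    dotR d (fun j => e N i j - c j) = d i - dotR d c := by
  simp [dotR, e, mul_sub, Finset.sum_sub_distrib, Pi.single_apply]

theorem sum_mul_dotR_single_sub {w : Fin N → ℝ} (hw₁ : ∑ i, w i = 1) (d c : Fin N → ℝ) :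
    ∑ i, w i * dotR d (fun j => e N i j - c j) = dotR d (fun j => w j - c j) := by
  simp only [dotR_single_sub, mul_sub, Finset.sum_sub_distrib, ← Finset.sum_mul, hw₁, one_mul]
  simp [dotR, mul_sub, Finset.sum_sub_distrib, mul_comm]

theorem eq_zero_of_balRatio_mem_Icc {γ a b : ℝ} (hγ : 0 < γ)
    (h : balRatio a b ∈ Set.Icc γ γ⁻¹) (hb : b = 0) : a = 0 := by
  by_contra ha
  rw [balRatio, if_neg fun h => ha h.1, hb, div_zero] at h
  exact hγ.not_ge h.1

theorem pos_of_balRatio_mem_Icc {γ a b : ℝ} (hγ : 0 < γ)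
    (h : balRatio a b ∈ Set.Icc γ γ⁻¹) (hb : 0 < b) : 0 < a := by
  rw [balRatio, if_neg fun h => hb.ne' h.2] at h
  exact div_pos_iff_of_pos_right hb |>.1 (hγ.trans_le h.1)

theorem IsTransMat.mulVec_e_nonneg {n : ℕ} {M : Matrix (Fin n) (Fin n) ℝ} (hM : IsTransMat M)
    (k i : Fin n) : 0 ≤ M.mulVec (e n k) i := by
  simpa [e, Matrix.mulVec_single_one] using hM.1 i k

theorem IsTransMat.sum_mulVec_e {n : ℕ} {M : Matrix (Fin n) (Fin n) ℝ} (hM : IsTransMat M)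
    (k : Fin n) : ∑ i, M.mulVec (e n k) i = 1 := by
  simpa [e, Matrix.mulVec_single_one] using hM.2 k

section PathAtom

variable {P : Measure Ω} {F : Filtration ℕ mΩ} {X : ℕ → Ω → (Fin N → ℝ)}

theorem IsCompletedNaturalFiltration.natSigma_le (hF : IsCompletedNaturalFiltration P X F)
    (t : ℕ) : natSigma X t ≤ F t :=
  fun B hB => (hF t B).2 ⟨B, hB, by simp⟩

theorem comap_le_natSigma {s t : ℕ} (hst : s ≤ t) :
    MeasurableSpace.comap (X s) inferInstance ≤ natSigma X t :=
  le_iSup₂ (f := fun s (_ : s ∈ Set.Iic t) => MeasurableSpace.comap (X s) inferInstance) s hst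

theorem IsCompletedNaturalFiltration.measurable (hF : IsCompletedNaturalFiltration P X F)
    (s : ℕ) : Measurable (X s) :=
  measurable_iff_comap_le.2 <|
    ((comap_le_natSigma le_rfl).trans (hF.natSigma_le s)).trans (F.le s)

theorem measurableSet_pathAtom (t : ℕ) (ω₀ : Ω) :
    MeasurableSet[natSigma X t] (pathAtom X t ω₀) := by
  have h : pathAtom X t ω₀ = ⋂ s, ⋂ (_ : s ≤ t), X s ⁻¹' {X s ω₀} := by
    ext ω; simp [pathAtom]
  rw [h]
  exact .iInter fun s => .iInter fun hs =>
    comap_le_natSigma hs _ ⟨{X s ω₀}, measurableSet_singleton _, rfl⟩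

theorem BasisValued.apply_eq_indicator (hX : BasisValued X) (t : ℕ) (ω : Ω) (i : Fin N) :
    X t ω i = {ω' | X t ω' = e N i}.indicator 1 ω := by
  obtain ⟨j, hj⟩ := hX t ω
  by_cases hji : j = i
  · subst hji; simp [hj, e]
  · have hω : ω ∉ {ω' | X t ω' = e N i} := fun h => by
      simpa [e, Pi.single_apply, hji] using congrFun (hj.symm.trans h) j
    rw [Set.indicator_of_notMem hω, hj]
    simp [e, Ne.symm hji]

variable {A : ℕ → Matrix (Fin N) (Fin N) ℝ}

theorem IsMarkovChain.ae_condExp_eq_of_mem_pathAtom (hA : IsMarkovChain P F X A) (t : ℕ)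
    (ω₀ : Ω) : ∀ᵐ ω ∂P, ω ∈ pathAtom X t ω₀ →
      ∀ i, (P[(fun ω' => X (t + 1) ω' i)|F t]) ω = (A t).mulVec (X t ω₀) i := by
  filter_upwards [ae_all_iff.2 (hA.2 t)] with ω hω hmem i
  rw [hω i, hmem t le_rfl]

theorem measureReal_inter_pathAtom [IsFiniteMeasure P] (hX : BasisValued X)
    (hF : IsCompletedNaturalFiltration P X F) (hA : IsMarkovChain P F X A) (t : ℕ) (ω₀ : Ω)
    (i : Fin N) :
    P.real ({ω | X (t + 1) ω = e N i} ∩ pathAtom X t ω₀) =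
      (A t).mulVec (X t ω₀) i * P.real (pathAtom X t ω₀) := by
  have hatom : MeasurableSet[F t] (pathAtom X t ω₀) :=
    hF.natSigma_le t _ (measurableSet_pathAtom t ω₀)
  have hS : MeasurableSet {ω | X (t + 1) ω = e N i} :=
    hF.measurable (t + 1) (measurableSet_singleton _)
  have hind : (fun ω => X (t + 1) ω i) = {ω | X (t + 1) ω = e N i}.indicator 1 :=
    funext fun ω => hX.apply_eq_indicator _ ω i
  calc P.real ({ω | X (t + 1) ω = e N i} ∩ pathAtom X t ω₀)
      = ∫ ω in pathAtom X t ω₀, X (t + 1) ω i ∂P := by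
        rw [hind, setIntegral_indicator hS, Set.inter_comm]; simp
    _ = ∫ ω in pathAtom X t ω₀, (P[(fun ω' => X (t + 1) ω' i)|F t]) ω ∂P :=
        (setIntegral_condExp (F.le t) (hind ▸ (integrable_const 1).indicator hS) hatom).symm
    _ = ∫ _ in pathAtom X t ω₀, (A t).mulVec (X t ω₀) i ∂P :=
        setIntegral_congr_ae (F.le t _ hatom) <| by
          filter_upwards [hA.ae_condExp_eq_of_mem_pathAtom t ω₀] with ω h hmem using h hmem i
    _ = (A t).mulVec (X t ω₀) i * P.real (pathAtom X t ω₀) := by simp [mul_comm]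

theorem measure_inter_pathAtom_pos_iff [IsFiniteMeasure P] (hX : BasisValued X)
    (hF : IsCompletedNaturalFiltration P X F) (hA : IsMarkovChain P F X A) {t : ℕ} {ω₀ : Ω}
    (hpos : 0 < P (pathAtom X t ω₀)) (i : Fin N) :
    0 < P ({ω | X (t + 1) ω = e N i} ∩ pathAtom X t ω₀) ↔
      0 < (A t).mulVec (X t ω₀) i := by
  have hreal (s : Set Ω) : 0 < P s ↔ 0 < P.real s := by
    simp [measureReal_def, ENNReal.toReal_pos_iff, measure_lt_top]
  rw [hreal, measureReal_inter_pathAtom hX hF hA, mul_pos_iff_of_pos_right ((hreal _).1 hpos)]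

theorem ae_minJump_eq_supportMin [IsFiniteMeasure P] (hX : BasisValued X)
    (hF : IsCompletedNaturalFiltration P X F) (hA : IsMarkovChain P F X A) {t : ℕ} {ω₀ : Ω}
    (hpos : 0 < P (pathAtom X t ω₀)) (z z' : Fin N → ℝ) :
    ∀ᵐ ω ∂P, ω ∈ pathAtom X t ω₀ → minJump P F X t ω₀ z z' ω =
      supportMin ((A t).mulVec (X t ω₀))
        (fun i => dotR (z - z') (fun j => e N i j - (A t).mulVec (X t ω₀) j)) := by
  filter_upwards [hA.ae_condExp_eq_of_mem_pathAtom t ω₀] with ω hω hmem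
  simp only [minJump, supportMin, hω hmem, measure_inter_pathAtom_pos_iff hX hF hA hpos]

end PathAtom

theorem gammaBalanced_comparison_general
    {Ω : Type*} {mΩ : MeasurableSpace Ω} {N : ℕ}
    (P : Measure Ω) [IsProbabilityMeasure P] (F : Filtration ℕ mΩ)
    (X : ℕ → Ω → (Fin N → ℝ)) (hX : BasisValued X)
    (hF : IsCompletedNaturalFiltration P X F)
    (A : ℕ → Matrix (Fin N) (Fin N) ℝ) (hA : IsMarkovChain P F X A)
    (γ : ℝ) (hγ : γ ∈ Set.Ioo (0 : ℝ) 1)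
    (f : Ω → ℕ → ℝ → (Fin N → ℝ) → ℝ)
    (hf : IsGammaBalanced P F X A γ f) :
    ∀ (t : ℕ) (y : ℝ) (z z' : Fin N → ℝ) (ω₀ : Ω), 0 < P (pathAtom X t ω₀) →
      ∀ᵐ ω ∂P, ω ∈ pathAtom X t ω₀ →
        (minJump P F X t ω₀ z z' ω < 0 →
          minJump P F X t ω₀ z z' ω < f ω t y z - f ω t y z') ∧
        (minJump P F X t ω₀ z z' ω = 0 → f ω t y z - f ω t y z' = 0) := by
  intro t y z z' ω₀ hpos
  obtain ⟨ψ, -, hψ⟩ := hf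
  obtain ⟨k, hk⟩ := hX t ω₀
  set c := (A t).mulVec (X t ω₀)
  have hc : ∀ i, 0 ≤ c i := by simpa only [c, hk] using (hA.1 t).mulVec_e_nonneg k
  have hc₁ : ∑ i, c i = 1 := by simpa only [c, hk] using (hA.1 t).sum_mulVec_e k
  have hcv : ∑ i, c i * dotR (z - z') (fun j => e N i j - c j) = 0 := by
    rw [sum_mul_dotR_single_sub hc₁]
    simp [dotR]
  filter_upwards [hψ t y z z', ae_minJump_eq_supportMin hX hF hA hpos z z']
    with ω ⟨hfd, hratio, hψ₁⟩ hmin hmem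
  rw [hmem t le_rfl] at hfd hratio
  have hw₀ (i : Fin N) (hi : c i = 0) : ψ ω t z z' i = 0 :=
    eq_zero_of_balRatio_mem_Icc hγ.1 (hratio i) hi
  have hw (i : Fin N) (hi : 0 < c i) : 0 < ψ ω t z z' i :=
    pos_of_balRatio_mem_Icc hγ.1 (hratio i) hi
  rw [hmin hmem, hfd, ← sum_mul_dotR_single_sub hψ₁]
  exact ⟨supportMin_lt_sum_mul hc hcv hw₀ hw hψ₁,
    sum_mul_eq_zero_of_supportMin_eq_zero hc hcv hw₀⟩

/-- A `γ`-balanced driver satisfies the comparison condition of the change-of-measure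
proposition. -/
theorem gammaBalanced_comparison
    {Ω : Type*} {mΩ : MeasurableSpace Ω} {N : ℕ}
    (P : Measure Ω) [IsProbabilityMeasure P] (F : Filtration ℕ mΩ)
    (X : ℕ → Ω → (Fin N → ℝ)) (hX : BasisValued X)
    (hF : IsCompletedNaturalFiltration P X F)
    (A : ℕ → Matrix (Fin N) (Fin N) ℝ) (hA : IsMarkovChain P F X A)
    (γ : ℝ) (hγ : γ ∈ Set.Ioo (0 : ℝ) 1)
    (f : Ω → ℕ → ℝ → (Fin N → ℝ) → ℝ) (hfAd : DriverAdapted F f)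
    (hf : IsGammaBalanced P F X A γ f) :
    ∀ (t : ℕ) (y : ℝ) (z z' : Fin N → ℝ) (ω₀ : Ω), 0 < P (pathAtom X t ω₀) →
      ∀ᵐ ω ∂P, ω ∈ pathAtom X t ω₀ →
        (minJump P F X t ω₀ z z' ω < 0 →
          minJump P F X t ω₀ z z' ω < f ω t y z - f ω t y z') ∧
        (minJump P F X t ω₀ z z' ω = 0 → f ω t y z - f ω t y z' = 0) :=
  gammaBalanced_comparison_general P F X hX hF A hA γ hγ f hf
end DiscreteEBSDE
end
end

section
/- (Representation of λ via ergodic measures) Let (Y,Z,λ) = (v(X_t), 𝐯, λ) be the unique bounded, stationary, Markovian solution of the EBSDE with γ-balanced Markovian driver f, where 𝐯 ∈ ℝ^N is the vector with entries e_kᵀ𝐯 = v(e_k). Let π denote the ergodic (invariant) measure of X under P. Then λ = Σ_{x∈S} f(x,𝐯)·π({x}). Furthermore, there exists a probability measure π_𝐯 on S such that λ = Σ_{x∈S} f(x,0)·π_𝐯({x}). -/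
open MeasureTheory Finset Filter

noncomputable section

namespace DiscreteEBSDE

variable {Ω : Type*} {mΩ : MeasurableSpace Ω} {N : ℕ}

/-! Testing the EBSDE over one step shows that, at every state `k` that `X` visits with positive
probability, `f (e k) v = λ + v k - (vᵀA) k`. The law of `X t` converges to `π`, so every state
charged by `π` is visited, and `π` is `A`-invariant as a limit of `Aᵗ π`; averaging against `π`
cancels `v - vᵀA`, which gives the first formula. Balancedness trades the column `A e_k` for a
probability vector `ψ_k` with the same support, hence supported in `supp π`, and
`f (e k) 0 = λ + v k - v ⬝ ψ_k`. At a maximiser of `v` on `supp π` this is `≥ λ`, at a minimiser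
`≤ λ`, so `λ` is a convex combination of two values of `f (·, 0)`. -/

open Matrix Topology

lemma isProbVec_e (k : Fin N) : IsProbVec (e N k) :=
  ⟨fun i => by unfold e; rw [Pi.single_apply]; split <;> norm_num, by simp [e]⟩

section ProbVec

variable {n : ℕ}

lemma IsProbVec.le_one {μ : Fin n → ℝ} (hμ : IsProbVec μ) (i : Fin n) : μ i ≤ 1 :=
  hμ.2 ▸ Finset.single_le_sum (fun j _ => hμ.1 j) (Finset.mem_univ i)

lemma IsProbVec.exists_pos {μ : Fin n → ℝ} (hμ : IsProbVec μ) : ∃ i, 0 < μ i := by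
  obtain ⟨i, -, hi⟩ := Finset.exists_lt_of_sum_lt (s := Finset.univ) (f := fun _ => 0) (g := μ)
    (by simp [hμ.2])
  exact ⟨i, hi⟩

lemma IsProbVec.dotProduct_le {q : Fin n → ℝ} (hq : IsProbVec q) {v : Fin n → ℝ}
    {c : ℝ} (hv : ∀ i, q i ≠ 0 → v i ≤ c) : v ⬝ᵥ q ≤ c :=
  calc v ⬝ᵥ q = ∑ i, v i * q i := rfl
    _ ≤ ∑ i, c * q i := Finset.sum_le_sum fun i _ => by
        rcases eq_or_ne (q i) 0 with h | h
        · simp [h]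
        · exact mul_le_mul_of_nonneg_right (hv i h) (hq.1 i)
    _ = c := by rw [← Finset.mul_sum, hq.2, mul_one]

lemma IsProbVec.le_dotProduct {q : Fin n → ℝ} (hq : IsProbVec q) {v : Fin n → ℝ}
    {c : ℝ} (hv : ∀ i, q i ≠ 0 → c ≤ v i) : c ≤ v ⬝ᵥ q := by
  have := hq.dotProduct_le (v := -v) (c := -c) fun i hi => neg_le_neg (hv i hi)
  rwa [neg_dotProduct, neg_le_neg_iff] at this

lemma exists_isProbVec_sum_mul_eq {g : Fin n → ℝ} {c : ℝ} {i j : Fin n}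
    (hi : g i ≤ c) (hj : c ≤ g j) : ∃ p, IsProbVec p ∧ c = ∑ k, g k * p k := by
  obtain ⟨a, b, ha, hb, hab, hc⟩ := Icc_subset_segment (𝕜 := ℝ) ⟨hi, hj⟩
  refine ⟨a • e n i + b • e n j, ⟨fun k => ?_, ?_⟩, ?_⟩
  · exact add_nonneg (mul_nonneg ha ((isProbVec_e i).1 k)) (mul_nonneg hb ((isProbVec_e j).1 k))
  · simp [Finset.sum_add_distrib, ← Finset.mul_sum, (isProbVec_e i).2, (isProbVec_e j).2, hab]
  · simp [e, mul_add, Pi.single_apply, Finset.sum_add_distrib, ← hc, mul_comm]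

lemma exists_le_and_le_of_eq_add_sub_dotProduct {s : Finset (Fin n)} (hs : s.Nonempty)
    (g v : Fin n → ℝ) (c : ℝ)
    (h : ∀ k ∈ s, ∃ q, IsProbVec q ∧ (∀ i, q i ≠ 0 → i ∈ s) ∧ g k = c + v k - v ⬝ᵥ q) :
    ∃ i j, g i ≤ c ∧ c ≤ g j := by
  obtain ⟨i, hi, hmin⟩ := s.exists_min_image v hs
  obtain ⟨j, hj, hmax⟩ := s.exists_max_image v hs
  obtain ⟨qi, hqi, hsi, hgi⟩ := h i hi
  obtain ⟨qj, hqj, hsj, hgj⟩ := h j hj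
  have := hqi.le_dotProduct fun l hl => hmin l (hsi l hl)
  have := hqj.dotProduct_le fun l hl => hmax l (hsj l hl)
  exact ⟨i, j, by linarith, by linarith⟩

lemma isProbVec_and_support_of_balRatio_mem_Icc {γ : ℝ} (hγ : 0 < γ)
    {q w : Fin n → ℝ} (hw : ∀ i, 0 ≤ w i) (hqw : ∀ i, balRatio (q i) (w i) ∈ Set.Icc γ γ⁻¹)
    (hq : ∑ i, q i = 1) : IsProbVec q ∧ ∀ i, q i ≠ 0 → w i ≠ 0 := by
  have hsupp : ∀ i, q i ≠ 0 → w i ≠ 0 := fun i hqi hwi => by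
    have := (hqw i).1
    simp [balRatio, hwi, hqi] at this
    linarith
  refine ⟨⟨fun i => ?_, hq⟩, hsupp⟩
  by_contra! hqi
  have hwi := (hw i).lt_of_ne' (hsupp i hqi.ne)
  have := (hqw i).1
  simp only [balRatio, hqi.ne, false_and, if_false] at this
  linarith [div_neg_of_neg_of_pos hqi hwi]

lemma pos_of_mulVec_eq_self {A : Matrix (Fin n) (Fin n) ℝ} (hA : ∀ i j, 0 ≤ A i j)
    {π : Fin n → ℝ} (hπ : ∀ i, 0 ≤ π i) (hπA : A *ᵥ π = π) {i k : Fin n} (hk : 0 < π k)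
    (hik : A i k ≠ 0) : 0 < π i :=
  calc 0 < A i k * π k := mul_pos ((hA i k).lt_of_ne' hik) hk
    _ ≤ ∑ j, A i j * π j :=
        Finset.single_le_sum (f := fun j => A i j * π j) (fun j _ => mul_nonneg (hA i j) (hπ j))
          (Finset.mem_univ k)
    _ = π i := congrFun hπA i

lemma sum_mul_eq_of_mulVec_eq_self {A : Matrix (Fin n) (Fin n) ℝ} {π : Fin n → ℝ}
    (hπ : IsProbVec π) (hπA : A *ᵥ π = π) {g v : Fin n → ℝ} {c : ℝ}
    (hg : ∀ k, 0 < π k → g k = c + v k - (v ᵥ* A) k) : ∑ k, g k * π k = c := by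
  have hterm : ∀ k, g k * π k = c * π k + v k * π k - (v ᵥ* A) k * π k := fun k => by
    rcases (hπ.1 k).eq_or_lt with hk | hk
    · simp [← hk]
    · rw [hg k hk]; ring
  calc ∑ k, g k * π k = c * ∑ k, π k + v ⬝ᵥ π - v ᵥ* A ⬝ᵥ π := by
        simp only [hterm, Finset.sum_sub_distrib, Finset.sum_add_distrib, Finset.mul_sum,
          dotProduct]
    _ = c := by rw [← dotProduct_mulVec, hπA, hπ.2]; ring

lemma tendsto_of_tvDist_le {w : ℕ → Fin n → ℝ} {π : Fin n → ℝ} {R ρ : ℝ} (hρ : 0 < ρ)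
    (hw : ∀ t : ℕ, tvDist (w t) π ≤ R * Real.exp (-ρ * t)) : Tendsto w atTop (𝓝 π) := by
  have hexp : Tendsto (fun t : ℕ => 2 * R * Real.exp (-ρ * t)) atTop (𝓝 0) := by
    simpa [neg_mul] using (Real.tendsto_exp_neg_atTop_nhds_zero.comp
      (tendsto_natCast_atTop_atTop.const_mul_atTop hρ)).const_mul (2 * R)
  refine tendsto_pi_nhds.2 fun k => tendsto_iff_norm_sub_tendsto_zero.2 <|
    squeeze_zero (fun _ => norm_nonneg _) (fun t => ?_) hexp
  calc ‖w t k - π k‖ ≤ ∑ x, |w t x - π x| :=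
        Finset.single_le_sum (f := fun x => |w t x - π x|) (fun _ _ => abs_nonneg _)
          (Finset.mem_univ k)
    _ ≤ 2 * R * Real.exp (-ρ * t) := by have := hw t; unfold tvDist at this; linarith

lemma mulVec_eq_self_of_tendsto {A : Matrix (Fin n) (Fin n) ℝ} {π : Fin n → ℝ}
    (h : Tendsto (fun t : ℕ => (A ^ t) *ᵥ π) atTop (𝓝 π)) : A *ᵥ π = π := by
  have hA : Tendsto (fun t : ℕ => A *ᵥ ((A ^ t) *ᵥ π)) atTop (𝓝 (A *ᵥ π)) :=
    ((continuous_const.matrix_mulVec continuous_id).tendsto π).comp h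
  have hshift : Tendsto (fun t : ℕ => A *ᵥ ((A ^ t) *ᵥ π)) atTop (𝓝 π) := by
    simpa [mulVec_mulVec, ← pow_succ'] using (tendsto_add_atTop_iff_nat 1).2 h
  exact tendsto_nhds_unique hA hshift

end ProbVec

lemma measurable_of_isCompletedNaturalFiltration {P : Measure Ω} {X : ℕ → Ω → Fin N → ℝ}
    {F : Filtration ℕ mΩ} (hF : IsCompletedNaturalFiltration P X F) (t : ℕ) :
    Measurable (X t) := fun s hs =>
  F.le t _ <| (hF t _).2 ⟨X t ⁻¹' s, le_iSup₂ (f := fun s _ => MeasurableSpace.comap (X s)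
    inferInstance) t (Set.mem_Iic.2 le_rfl) _ ⟨s, hs, rfl⟩, by simp⟩

lemma BasisValued.isProbVec {X : ℕ → Ω → Fin N → ℝ} (hX : BasisValued X) (t : ℕ) (ω : Ω) :
    IsProbVec (X t ω) := by
  obtain ⟨k, hk⟩ := hX t ω
  exact hk ▸ isProbVec_e k

lemma Mdiff_ae_eq {P : Measure Ω} {F : Filtration ℕ mΩ} {X : ℕ → Ω → Fin N → ℝ}
    {A : ℕ → Matrix (Fin N) (Fin N) ℝ} (hA : IsMarkovChain P F X A) (t : ℕ) :
    Mdiff P F X t =ᵐ[P] fun ω => X (t + 1) ω - A t *ᵥ X t ω := by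
  filter_upwards [ae_all_iff.2 (hA.2 t)] with ω hω
  funext i
  simp [Mdiff, hω i]

/-- Since `X t` is valued in the standard basis, `marginal P X t i = P (X t = e i)`. -/
def marginal (P : Measure Ω) (X : ℕ → Ω → Fin N → ℝ) (t : ℕ) : Fin N → ℝ :=
  fun i => ∫ ω, X t ω i ∂P

section marginal

variable {P : Measure Ω} [IsProbabilityMeasure P] {X : ℕ → Ω → Fin N → ℝ}

lemma integrable_apply (hX : BasisValued X) (hXm : ∀ t, Measurable (X t))
    (t : ℕ) (i : Fin N) : Integrable (fun ω => X t ω i) P :=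
  Integrable.of_bound ((measurable_pi_apply i).comp (hXm t)).aestronglyMeasurable 1 <|
    ae_of_all _ fun ω => by
      rw [Real.norm_of_nonneg ((hX.isProbVec t ω).1 i)]
      exact (hX.isProbVec t ω).le_one i

lemma isProbVec_marginal (hX : BasisValued X) (hXm : ∀ t, Measurable (X t))
    (t : ℕ) : IsProbVec (marginal P X t) := by
  refine ⟨fun i => integral_nonneg fun ω => (hX.isProbVec t ω).1 i, ?_⟩
  simp only [marginal]
  rw [← integral_finsetSum _ fun i _ => integrable_apply hX hXm t i]
  simp [(hX.isProbVec t _).2]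

lemma marginal_succ (hX : BasisValued X) (hXm : ∀ t, Measurable (X t))
    {F : Filtration ℕ mΩ} {A : ℕ → Matrix (Fin N) (Fin N) ℝ} (hA : IsMarkovChain P F X A)
    (t : ℕ) : marginal P X (t + 1) = A t *ᵥ marginal P X t := by
  funext i
  calc marginal P X (t + 1) i = ∫ ω, (P[fun ω' => X (t + 1) ω' i|F t]) ω ∂P :=
        (integral_condExp (F.le t)).symm
    _ = ∫ ω, ∑ j, A t i j * X t ω j ∂P := integral_congr_ae (hA.2 t i)
    _ = (A t *ᵥ marginal P X t) i := by
        rw [integral_finsetSum _ fun j _ => (integrable_apply hX hXm t j).const_mul _]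
        simp only [integral_const_mul]
        rfl

lemma marginal_eq_pow_mulVec (hX : BasisValued X) (hXm : ∀ t, Measurable (X t))
    {F : Filtration ℕ mΩ} {A : Matrix (Fin N) (Fin N) ℝ}
    (hA : IsMarkovChain P F X fun _ => A) (t : ℕ) :
    marginal P X t = (A ^ t) *ᵥ marginal P X 0 := by
  induction t with
  | zero => simp
  | succ t ih => rw [marginal_succ hX hXm hA, ih, mulVec_mulVec, ← pow_succ']

end marginal

lemma measure_pos_of_marginal_pos {P : Measure Ω} {X : ℕ → Ω → Fin N → ℝ} (hX : BasisValued X)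
    {t : ℕ} {k : Fin N} (hk : 0 < marginal P X t k) :
    0 < P {ω | X t ω = e N k} := by
  refine pos_iff_ne_zero.2 fun h0 => hk.ne' ?_
  refine integral_eq_zero_of_ae ?_
  filter_upwards [measure_eq_zero_iff_ae_notMem.1 h0] with ω hω
  obtain ⟨j, hj⟩ := hX t ω
  have hjk : j ≠ k := by rintro rfl; exact hω hj
  simp [hj, e, hjk.symm]

lemma tendsto_marginal {P : Measure Ω} [IsProbabilityMeasure P] {F : Filtration ℕ mΩ}
    {X : ℕ → Ω → Fin N → ℝ} (hX : BasisValued X) (hXm : ∀ t, Measurable (X t))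
    {A : Matrix (Fin N) (Fin N) ℝ} (hA : IsMarkovChain P F X fun _ => A) {π : Fin N → ℝ}
    {R ρ : ℝ} (hρ : 0 < ρ) (herg : ∀ (t : ℕ) (μ : Fin N → ℝ), IsProbVec μ →
      tvDist ((A ^ t) *ᵥ μ) π ≤ R * Real.exp (-ρ * t)) :
    Tendsto (marginal P X) atTop (𝓝 π) :=
  tendsto_of_tvDist_le hρ fun t =>
    marginal_eq_pow_mulVec hX hXm hA t ▸ herg t _ (isProbVec_marginal hX hXm 0)

lemma exists_measure_pos_of_tendsto_marginal {P : Measure Ω} {X : ℕ → Ω → Fin N → ℝ}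
    (hX : BasisValued X) {π : Fin N → ℝ} (h : Tendsto (marginal P X) atTop (𝓝 π)) {k : Fin N}
    (hk : 0 < π k) : ∃ t, 0 < P {ω | X t ω = e N k} :=
  ((tendsto_pi_nhds.1 h k).eventually (lt_mem_nhds hk)).exists.imp fun _ =>
    measure_pos_of_marginal_pos hX

lemma SolvesEBSDE.ae_driver_eq {P : Measure Ω} {F : Filtration ℕ mΩ}
    {X : ℕ → Ω → Fin N → ℝ} {A : Matrix (Fin N) (Fin N) ℝ} (hA : IsMarkovChain P F X fun _ => A)
    {f : (Fin N → ℝ) → (Fin N → ℝ) → ℝ} {v : Fin N → ℝ} {lam : ℝ}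
    (hsol : SolvesEBSDE P F X f (fun t ω => dotR v (X t ω)) (fun _ _ => v) lam) (t : ℕ) :
    ∀ᵐ ω ∂P, f (X t ω) v = lam + v ⬝ᵥ X t ω - v ⬝ᵥ (A *ᵥ X t ω) := by
  filter_upwards [hsol t (t + 1) t.lt_succ_self, Mdiff_ae_eq hA t] with ω hω hM
  simp only [Nat.Ico_succ_singleton, Finset.sum_singleton, hM] at hω
  change v ⬝ᵥ X (t + 1) ω = v ⬝ᵥ X t ω - (f (X t ω) v - lam) +
    v ⬝ᵥ (X (t + 1) ω - A *ᵥ X t ω) at hω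
  rw [dotProduct_sub] at hω
  linarith

lemma SolvesEBSDE.driver_eq_of_measure_pos {P : Measure Ω} {F : Filtration ℕ mΩ}
    {X : ℕ → Ω → Fin N → ℝ} {A : Matrix (Fin N) (Fin N) ℝ} (hA : IsMarkovChain P F X fun _ => A)
    {f : (Fin N → ℝ) → (Fin N → ℝ) → ℝ} {v : Fin N → ℝ} {lam : ℝ}
    (hsol : SolvesEBSDE P F X f (fun t ω => dotR v (X t ω)) (fun _ _ => v) lam)
    {t : ℕ} {k : Fin N} (hk : 0 < P {ω | X t ω = e N k}) :
    f (e N k) v = lam + v k - (v ᵥ* A) k := by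
  obtain ⟨ω, hωk, hω⟩ := Measure.exists_mem_of_measure_ne_zero_of_ae hk.ne'
    (ae_restrict_of_ae (hsol.ae_driver_eq hA t))
  replace hωk : X t ω = Pi.single k 1 := hωk
  rw [hωk, dotProduct_mulVec, dotProduct_single_one, dotProduct_single_one] at hω
  exact hω

lemma IsGammaBalancedNoY.exists_driver_sub_eq {P : Measure Ω} {F : Filtration ℕ mΩ}
    {X : ℕ → Ω → Fin N → ℝ} {A : Matrix (Fin N) (Fin N) ℝ} (hA : ∀ i j, 0 ≤ A i j)
    {γ : ℝ} (hγ : 0 < γ) {f : (Fin N → ℝ) → (Fin N → ℝ) → ℝ}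
    (hf : IsGammaBalancedNoY P F X (fun _ => A) γ fun ω t z => f (X t ω) z)
    {t : ℕ} {k : Fin N} (hk : 0 < P {ω | X t ω = e N k}) (z z' : Fin N → ℝ) :
    ∃ q, IsProbVec q ∧ (∀ i, q i ≠ 0 → A i k ≠ 0) ∧
      f (e N k) z - f (e N k) z' = (z - z') ⬝ᵥ q - ((z - z') ᵥ* A) k := by
  obtain ⟨ψ, -, hψ⟩ := hf
  obtain ⟨ω, hωk, hdiff, hratio, hsum⟩ := Measure.exists_mem_of_measure_ne_zero_of_ae hk.ne'
    (ae_restrict_of_ae (hψ t z z'))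
  replace hωk : X t ω = e N k := hωk
  have hAe : A *ᵥ e N k = fun i => A i k := by funext i; simp [e]
  simp only [hωk, hAe] at hdiff hratio
  obtain ⟨hq, hsupp⟩ := isProbVec_and_support_of_balRatio_mem_Icc hγ (fun i => hA i k) hratio hsum
  exact ⟨ψ ω t z z', hq, hsupp, hdiff.trans (dotProduct_sub _ _ _)⟩

/-- **Representation of `λ` via ergodic measures.** -/
theorem lambda_representation
    {Ω : Type*} {mΩ : MeasurableSpace Ω} {N : ℕ}
    (P : Measure Ω) [IsProbabilityMeasure P] (F : Filtration ℕ mΩ)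
    (X : ℕ → Ω → (Fin N → ℝ)) (hX : BasisValued X)
    (hF : IsCompletedNaturalFiltration P X F)
    (A : Matrix (Fin N) (Fin N) ℝ) (hA : IsMarkovChain P F X fun _ => A)
    (γ : ℝ) (hγ : γ ∈ Set.Ioo (0 : ℝ) 1)
    (f : (Fin N → ℝ) → (Fin N → ℝ) → ℝ)
    (hf : IsGammaBalancedNoY P F X (fun _ => A) γ fun ω t z => f (X t ω) z)
    -- `π` is the ergodic measure of `X` under `P`
    (π : Fin N → ℝ) (hπ : IsProbVec π)
    (hπerg : ∃ R ρ : ℝ, 0 < R ∧ 0 < ρ ∧ ∀ (t : ℕ) (μ : Fin N → ℝ), IsProbVec μ →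
      tvDist ((A ^ t).mulVec μ) π ≤ R * Real.exp (-ρ * t))
    -- the bounded stationary Markovian solution
    (v : Fin N → ℝ) (lam : ℝ)
    (hsol : SolvesEBSDE P F X f (fun t ω => dotR v (X t ω)) (fun _ _ => v) lam) :
    lam = ∑ k : Fin N, f (e N k) v * π k ∧
      ∃ πv : Fin N → ℝ, IsProbVec πv ∧ lam = ∑ k : Fin N, f (e N k) 0 * πv k := by
  obtain ⟨R, ρ, -, hρ, herg⟩ := hπerg
  have hXm := measurable_of_isCompletedNaturalFiltration hF
  have hπA : A *ᵥ π = π := mulVec_eq_self_of_tendsto (tendsto_of_tvDist_le hρ fun t => herg t π hπ)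
  have hvisit : ∀ k, 0 < π k → ∃ t, 0 < P {ω | X t ω = e N k} := fun k =>
    exists_measure_pos_of_tendsto_marginal hX (tendsto_marginal hX hXm hA hρ herg)
  have hfv : ∀ k, 0 < π k → f (e N k) v = lam + v k - (v ᵥ* A) k := fun k hk =>
    (hvisit k hk).elim fun _ ht => hsol.driver_eq_of_measure_pos hA ht
  refine ⟨(sum_mul_eq_of_mulVec_eq_self hπ hπA hfv).symm, ?_⟩
  have hsupp : (Finset.univ.filter (0 < π ·)).Nonempty :=
    hπ.exists_pos.imp fun k hk => by simpa using hk
  obtain ⟨i, j, hi, hj⟩ := exists_le_and_le_of_eq_add_sub_dotProduct hsupp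
      (fun k => f (e N k) 0) v lam fun k hk => by
    replace hk : 0 < π k := by simpa using hk
    obtain ⟨t, ht⟩ := hvisit k hk
    obtain ⟨q, hq, hqA, hfq⟩ := hf.exists_driver_sub_eq (hA.1 0).1 hγ.1 ht v 0
    refine ⟨q, hq, fun i hi => ?_, ?_⟩
    · simpa using pos_of_mulVec_eq_self (hA.1 0).1 hπ.1 hπA hk (hqA i hi)
    · rw [sub_zero] at hfq
      linarith [hfv k hk]
  exact exists_isProbVec_sum_mul_eq hi hj

end DiscreteEBSDE
end
end
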